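/- For every pattern P of size k ≥ 2 and every index m ∈ {1,…,k}, the set of records of the dataset containing P is contained in the set of records containing the deletion pattern del_m(P); consequently {Z ∈ D : P ∈ Z} ⊆ ⋂_{m=1}^{k} {Z ∈ D : del_m(P) ∈ Z}. -/
import Mathlib


/-- The two Allen-style temporal relations used: `b` = before, `c` = co-occurs. -/
inductive TRel : Type
  | b : TRel
  | c : TRel
deriving DecidableEq

/-- A state: a variable label together with an abstraction value. -/
structure TState (Ab Lab : Type*) where
  F : Lab
  V : Ab

/-- A state interval: a state together with start and end times `s ≤ e`. -/
structure StateInterval (Ab Lab : Type*) where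
  F : Lab
  V : Ab
  s : ℝ
  e : ℝ
  hse : s ≤ e

/-- A multivariate state sequence: a finite sequence of state intervals with
nondecreasing start times. -/
structure MSS (Ab Lab : Type*) where
  l : ℕ
  E : Fin l → StateInterval Ab Lab
  mono : ∀ i j : Fin l, i ≤ j → (E i).s ≤ (E j).s

/-- The temporal relation between two state intervals (the earlier one first):
`b` if the first ends strictly before the second starts, `c` otherwise. -/
noncomputable def irel {Ab Lab : Type*} (Ei Ej : StateInterval Ab Lab) : TRel :=
  if Ei.e < Ej.s then TRel.b else TRel.c

/-- A temporal pattern of size `k`: a sequence of `k` states together with a map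
assigning a temporal relation to each pair of indices (only `i < j` is relevant). -/
structure Pattern (Ab Lab : Type*) where
  k : ℕ
  S : Fin k → TState Ab Lab
  R : Fin k → Fin k → TRel

/-- `Z` contains `P`: there is a strictly increasing map matching the states of `P`
to state intervals of `Z` realizing the prescribed temporal relations. -/
def Contains {Ab Lab : Type*} (Z : MSS Ab Lab) (P : Pattern Ab Lab) : Prop :=
  ∃ π : Fin P.k → Fin Z.l, StrictMono π ∧
    (∀ i, (P.S i).F = (Z.E (π i)).F ∧ (P.S i).V = (Z.E (π i)).V) ∧
    (∀ i j : Fin P.k, i < j → irel (Z.E (π i)) (Z.E (π j)) = P.R i j)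

/-- `Q` is a subpattern of `P`: there is a strictly increasing index map preserving
states and the relations between pairs of indices. -/
def Subpattern {Ab Lab : Type*} (Q P : Pattern Ab Lab) : Prop :=
  ∃ σ : Fin Q.k → Fin P.k, StrictMono σ ∧
    (∀ i, Q.S i = P.S (σ i)) ∧
    (∀ i j : Fin Q.k, i < j → Q.R i j = P.R (σ i) (σ j))

/-- The strictly increasing map `Fin (P.k - 1) → Fin P.k` that skips index `m`. -/
def delMap {Ab Lab : Type*} (P : Pattern Ab Lab) (m : Fin P.k) :
    Fin (P.k - 1) → Fin P.k := fun i =>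
  Fin.cast (Nat.succ_pred_eq_of_pos m.pos)
    ((Fin.cast (Nat.succ_pred_eq_of_pos m.pos).symm m).succAbove i)

/-- The deletion pattern `del_m(P)`: the pattern of size `P.k - 1` obtained from `P`
by deleting the `m`-th state and restricting the relation map. -/
def del {Ab Lab : Type*} (P : Pattern Ab Lab) (m : Fin P.k) : Pattern Ab Lab where
  k := P.k - 1
  S := fun i => P.S (delMap P m i)
  R := fun i j => P.R (delMap P m i) (delMap P m j)

/-- For every pattern of size ≥ 2 and every index m, the records containing P are
contained in the records containing del_m(P); consequently they are contained in the
intersection over all m of these record sets. -/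
theorem records_subset_del_records {Ab Lab : Type*} (P : Pattern Ab Lab) (hk : 2 ≤ P.k)
    (D : Finset (MSS Ab Lab)) :
    (∀ m : Fin P.k,
      {Z ∈ (D : Set (MSS Ab Lab)) | Contains Z P} ⊆
        {Z ∈ (D : Set (MSS Ab Lab)) | Contains Z (del P m)}) ∧
    {Z ∈ (D : Set (MSS Ab Lab)) | Contains Z P} ⊆
      ⋂ m : Fin P.k, {Z ∈ (D : Set (MSS Ab Lab)) | Contains Z (del P m)} := by
  have hmono : ∀ m : Fin P.k, StrictMono (delMap P m) := by
    intro m i j hij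
    exact (Fin.castOrderIso (Nat.succ_pred_eq_of_pos m.pos)).strictMono
      ((Fin.strictMono_succAbove _) hij)
  have key : ∀ m : Fin P.k,
      {Z ∈ (D : Set (MSS Ab Lab)) | Contains Z P} ⊆
        {Z ∈ (D : Set (MSS Ab Lab)) | Contains Z (del P m)} := by
    intro m Z hZ
    obtain ⟨hZD, π, hπ, hstate, hrel⟩ := hZ
    refine ⟨hZD, π ∘ delMap P m, hπ.comp (hmono m), ?_, ?_⟩
    · intro i
      exact hstate (delMap P m i)
    · intro i j hij
      exact hrel _ _ (hmono m hij)
  exact ⟨key, fun Z hZ => Set.mem_iInter.2 fun m => key m hZ⟩
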